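/- Suppose 0 < Z_SD < Z_SR and Z_RD > 0, S > 0. Then the supremum of x1 + x2 + x3 over all feasible tuples (t1, t2, α, x1, x2, x3) of the three-node flow optimization problem is at least C(Z_SR·S)·C((Z_SD + Z_RD)·S) / ( C(Z_SR·S) + C((Z_SD + Z_RD)·S) − C(Z_SD·S) ). -/
import Mathlib


open Real

/-- Shannon-type capacity function `C(x) = log (1 + x)` (natural logarithm). -/
noncomputable def capC (x : ℝ) : ℝ := Real.log (1 + x)

/-- Feasibility of a tuple `(t1, t2, α, x1, x2, x3)` for the three-node
flow optimization problem with link gains `ZSD, ZSR, ZRD` and transmit SNR `S`. -/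
def Feasible (ZSD ZSR ZRD S t1 t2 α x1 x2 x3 : ℝ) : Prop :=
  0 ≤ t1 ∧ 0 ≤ t2 ∧ t1 + t2 = 1 ∧ 0 ≤ α ∧ α ≤ 1 ∧
  0 ≤ x1 ∧ 0 ≤ x2 ∧ 0 ≤ x3 ∧
  x2 ≤ t2 * capC (ZRD * S) ∧
  x3 ≤ t2 * capC (ZSD * S) ∧
  x2 + x3 ≤ t2 * capC ((ZSD + ZRD) * S) ∧
  (ZSR ≤ ZSD →
    x1 ≤ t1 * capC (ZSD * α * S) ∧
    x2 ≤ t1 * capC (ZSR * (1 - α) * S / (1 + ZSR * α * S))) ∧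
  (ZSD < ZSR →
    x1 ≤ t1 * capC (ZSD * α * S / (1 + ZSD * (1 - α) * S)) ∧
    x2 ≤ t1 * capC (ZSR * (1 - α) * S))

lemma capC_nonneg {x : ℝ} (h : 0 ≤ x) : 0 ≤ capC x :=
  Real.log_nonneg (by linarith)

lemma capC_pos {x : ℝ} (h : 0 < x) : 0 < capC x :=
  Real.log_pos (by linarith)

lemma capC_mono {x y : ℝ} (hx : 0 ≤ x) (h : x ≤ y) : capC x ≤ capC y :=
  Real.log_le_log (by linarith) (by linarith)

lemma capC_strict_mono {x y : ℝ} (hx : 0 ≤ x) (h : x < y) : capC x < capC y :=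
  Real.log_lt_log (by linarith) (by linarith)

set_option maxHeartbeats 1000000 in
/-- When `0 < Z_SD < Z_SR`, the supremum of the achievable rate
of the three-node flow optimization problem is at least
`C(Z_SR·S)·C((Z_SD+Z_RD)·S)/(C(Z_SR·S) + C((Z_SD+Z_RD)·S) − C(Z_SD·S))`. -/
theorem sup_rate_ge_relaying_rate
    (ZSD ZSR ZRD S : ℝ) (hZSD : 0 < ZSD) (hZ : ZSD < ZSR) (hZRD : 0 < ZRD)
    (hS : 0 < S) :
    capC (ZSR * S) * capC ((ZSD + ZRD) * S) /
        (capC (ZSR * S) + capC ((ZSD + ZRD) * S) - capC (ZSD * S))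
      ≤ sSup {x : ℝ | ∃ t1 t2 α x1 x2 x3 : ℝ,
          Feasible ZSD ZSR ZRD S t1 t2 α x1 x2 x3 ∧ x = x1 + x2 + x3} := by
  have hZSR : 0 < ZSR := hZSD.trans hZ
  set A := capC (ZSR * S) with hAdef
  set B := capC ((ZSD + ZRD) * S) with hBdef
  set D := capC (ZSD * S) with hDdef
  set CRD := capC (ZRD * S) with hCRDdef
  have hA : 0 < A := capC_pos (mul_pos hZSR hS)
  have hDpos : 0 < D := capC_pos (mul_pos hZSD hS)
  have hB : 0 < B := capC_pos (mul_pos (by linarith) hS)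
  have hCRD : 0 < CRD := capC_pos (mul_pos hZRD hS)
  have hDA : D < A := capC_strict_mono (mul_pos hZSD hS).le
    (by nlinarith)
  have hDB : D < B := capC_strict_mono (mul_pos hZSD hS).le
    (by nlinarith)
  have hE : 0 < A + B - D := by linarith
  -- key: B - D ≤ CRD
  have hBD : B - D ≤ CRD := by
    have h1 : (0:ℝ) < 1 + ZSD * S := by nlinarith
    have h2 : (0:ℝ) < 1 + ZRD * S := by nlinarith
    have hmul : (1 + (ZSD + ZRD) * S) ≤ (1 + ZSD * S) * (1 + ZRD * S) := by
      nlinarith [mul_nonneg (mul_nonneg hZSD.le hZRD.le) (mul_nonneg hS.le hS.le)]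
    have hlog := Real.log_le_log (by nlinarith) hmul
    rw [Real.log_mul (ne_of_gt h1) (ne_of_gt h2)] at hlog
    simp only [hBdef, hDdef, hCRDdef, capC]
    linarith
  have hbdd : BddAbove {x : ℝ | ∃ t1 t2 α x1 x2 x3 : ℝ,
      Feasible ZSD ZSR ZRD S t1 t2 α x1 x2 x3 ∧ x = x1 + x2 + x3} := by
    refine ⟨2 * A + D, ?_⟩
    rintro x ⟨t1, t2, α, x1, x2, x3,
      ⟨ht1, ht2, hsum, hα0, hα1, hx1, hx2, hx3, hc1, hc2, hc3, _, h5⟩, rfl⟩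
    obtain ⟨h5a, h5b⟩ := h5 hZ
    have ht1' : t1 ≤ 1 := by linarith
    have ht2' : t2 ≤ 1 := by linarith
    have hnn1 : 0 ≤ ZSD * α * S := mul_nonneg (mul_nonneg hZSD.le hα0) hS.le
    have hnn2 : 0 ≤ ZSD * (1 - α) * S :=
      mul_nonneg (mul_nonneg hZSD.le (by linarith)) hS.le
    have hden : (1:ℝ) ≤ 1 + ZSD * (1 - α) * S := by linarith
    have harg1 : ZSD * α * S / (1 + ZSD * (1 - α) * S) ≤ ZSR * S := by
      have h1 : ZSD * α * S / (1 + ZSD * (1 - α) * S) ≤ ZSD * α * S :=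
        div_le_self hnn1 hden
      have h2 : ZSD * α * S ≤ ZSR * S := by nlinarith
      linarith
    have harg1' : 0 ≤ ZSD * α * S / (1 + ZSD * (1 - α) * S) :=
      div_nonneg hnn1 (by linarith)
    have hb1 : x1 ≤ t1 * A := le_trans h5a
      (mul_le_mul_of_nonneg_left (capC_mono harg1' harg1) ht1)
    have harg2 : ZSR * (1 - α) * S ≤ ZSR * S := by nlinarith
    have harg2' : 0 ≤ ZSR * (1 - α) * S :=
      mul_nonneg (mul_nonneg hZSR.le (by linarith)) hS.le
    have hb2 : x2 ≤ t1 * A := le_trans h5b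
      (mul_le_mul_of_nonneg_left (capC_mono harg2' harg2) ht1)
    have hb3 : x3 ≤ t2 * D := hc2
    nlinarith [mul_le_mul_of_nonneg_right ht1' hA.le,
      mul_le_mul_of_nonneg_right ht2' hDpos.le]
  apply le_csSup hbdd
  refine ⟨(B - D) / (A + B - D), A / (A + B - D), 0, 0,
    (B - D) / (A + B - D) * A, A / (A + B - D) * D, ?_, ?_⟩
  · refine ⟨div_nonneg (by linarith) hE.le, div_nonneg hA.le hE.le, ?_,
      le_refl 0, zero_le_one, le_refl 0,
      mul_nonneg (div_nonneg (by linarith) hE.le) hA.le,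
      mul_nonneg (div_nonneg hA.le hE.le) hDpos.le, ?_, le_refl _, ?_, ?_, ?_⟩
    · field_simp; ring
    · -- x2 ≤ t2 * CRD
      have heq : (B - D) / (A + B - D) * A = A / (A + B - D) * (B - D) := by ring
      rw [heq]
      exact mul_le_mul_of_nonneg_left hBD (div_nonneg hA.le hE.le)
    · -- x2 + x3 ≤ t2 * B
      have heq : (B - D) / (A + B - D) * A + A / (A + B - D) * D
          = A / (A + B - D) * B := by
        field_simp; ring
      exact le_of_eq heq
    · intro h; exact absurd hZ (not_lt.mpr h)
    · intro _
      refine ⟨?_, ?_⟩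
      · have h0 : capC (ZSD * 0 * S / (1 + ZSD * (1 - 0) * S)) = 0 := by
          simp [capC]
        rw [h0, mul_zero]
      · have h0 : ZSR * (1 - 0) * S = ZSR * S := by ring
        rw [h0]
  · field_simp
    ring
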